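/- arXiv:2210.09720 — 4 statements merged into one kernel-verified Lean document; each statement's English description precedes it below -/
import Mathlib

section
/- Let $E$ be a Riesz space and $x, y \in E$ with $x \sqsubseteq y$ (i.e., $x \perp (y-x)$). Then $x^+ \sqsubseteq y^+$, $x^- \sqsubseteq y^-$, and $|x| \sqsubseteq |y|$. -/
/-- Disjointness in a Riesz space: `|x| ⊓ |y| = 0`. -/
def RDisjoint {E : Type*} [Lattice E] [AddCommGroup E] (x y : E) : Prop :=
  |x| ⊓ |y| = 0

/-- `x` is a fragment of `e` (lateral order `x ⊑ e`): `x ⊥ (e - x)`. -/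
def IsFragment {E : Type*} [Lattice E] [AddCommGroup E] (x e : E) : Prop :=
  RDisjoint x (e - x)

/-- An orthogonally additive operator. -/
def IsOAO {E F : Type*} [Lattice E] [AddCommGroup E] [Lattice F] [AddCommGroup F]
    (T : E → F) : Prop :=
  ∀ x y : E, RDisjoint x y → T (x + y) = T x + T y

variable {E F : Type*}
  [Lattice E] [AddCommGroup E] [CovariantClass E E (· + ·) (· ≤ ·)]
  [Lattice F] [AddCommGroup F] [CovariantClass F F (· + ·) (· ≤ ·)]

/-!
If `x ⊥ d`, the pieces `x⁺ + d⁺` and `x⁻ + d⁻` are disjoint, so by uniqueness of the Jordan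
decomposition they are the positive and negative parts of `x + d`. Hence `x ↦ x⁺`, `x ↦ x⁻` and
`x ↦ |x|` are orthogonally additive, and since they do not increase `|·|`, writing
`y = x + (y - x)` shows that they preserve the lateral order.
-/

lemma RDisjoint.symm {α : Type*} [Lattice α] [AddCommGroup α] {a b : α} (h : RDisjoint a b) :
    RDisjoint b a := by
  rw [RDisjoint, inf_comm]
  exact h

lemma RDisjoint.neg {α : Type*} [Lattice α] [AddCommGroup α] {a b : α} (h : RDisjoint a b) :
    RDisjoint (-a) (-b) := by
  rw [RDisjoint, abs_neg, abs_neg]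
  exact h

lemma inf_eq_zero_of_le {α : Type*} [Lattice α] [Zero α] {a b u v : α} (hu : 0 ≤ u) (hv : 0 ≤ v)
    (hua : u ≤ a) (hvb : v ≤ b) (h : a ⊓ b = 0) : u ⊓ v = 0 :=
  le_antisymm (h ▸ inf_le_inf hua hvb) (le_inf hu hv)

section LatticeOrderedGroup

variable {α : Type*} [Lattice α] [AddCommGroup α] [AddLeftMono α] {a b c : α}

lemma sup_eq_add_of_inf_eq_zero (h : a ⊓ b = 0) : a ⊔ b = a + b := by
  simpa [h] using inf_add_sup a b

lemma add_inf_eq_inf_of_inf_eq_zero (hb : 0 ≤ b) (h : a ⊓ c = 0) : (a + b) ⊓ c = b ⊓ c := by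
  have hab : (a + b) ⊓ (c + b) = b := by rw [← inf_add, h, zero_add]
  calc (a + b) ⊓ c = (a + b) ⊓ (c + b) ⊓ c := by
        rw [inf_assoc, inf_eq_right.2 (le_add_of_nonneg_right hb)]
    _ = b ⊓ c := by rw [hab]

lemma add_inf_eq_zero (hac : a ⊓ c = 0) (hbc : b ⊓ c = 0) : (a + b) ⊓ c = 0 := by
  rw [add_inf_eq_inf_of_inf_eq_zero (hbc ▸ inf_le_left) hac, hbc]

lemma posPart_sub_of_inf_eq_zero (h : a ⊓ b = 0) : (a - b)⁺ = a := by
  rw [posPart_def, ← sub_self b, ← sup_sub, sup_eq_add_of_inf_eq_zero h, add_sub_cancel_right]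

lemma posPart_le_abs (a : α) : a⁺ ≤ |a| :=
  sup_le (le_abs_self a) (abs_nonneg a)

lemma negPart_le_abs (a : α) : a⁻ ≤ |a| :=
  sup_le (neg_le_abs a) (abs_nonneg a)

lemma abs_posPart_le_abs (a : α) : |a⁺| ≤ |a| := by
  rw [abs_of_nonneg (posPart_nonneg a)]
  exact posPart_le_abs a

lemma abs_negPart_le_abs (a : α) : |a⁻| ≤ |a| := by
  rw [abs_of_nonneg (negPart_nonneg a)]
  exact negPart_le_abs a

end LatticeOrderedGroup

section Disjoint

variable {α : Type*} [Lattice α] [AddCommGroup α] [AddLeftMono α] {a b : α}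

lemma RDisjoint.mono {u v : α} (h : RDisjoint a b) (hu : |u| ≤ |a|) (hv : |v| ≤ |b|) :
    RDisjoint u v :=
  inf_eq_zero_of_le (abs_nonneg u) (abs_nonneg v) hu hv h

lemma RDisjoint.posPart_inf_negPart (h : RDisjoint a b) : a⁺ ⊓ b⁻ = 0 :=
  inf_eq_zero_of_le (posPart_nonneg a) (negPart_nonneg b) (posPart_le_abs a) (negPart_le_abs b) h

lemma RDisjoint.add_posPart_inf_add_negPart (h : RDisjoint a b) :
    (a⁺ + b⁺) ⊓ (a⁻ + b⁻) = 0 := by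
  rw [inf_comm]
  refine add_inf_eq_zero ?_ ?_ <;> rw [inf_comm]
  · exact add_inf_eq_zero (posPart_inf_negPart_eq_zero a) h.symm.posPart_inf_negPart
  · exact add_inf_eq_zero h.posPart_inf_negPart (posPart_inf_negPart_eq_zero b)

lemma RDisjoint.posPart_add (h : RDisjoint a b) : (a + b)⁺ = a⁺ + b⁺ := by
  have hab : a + b = (a⁺ + b⁺) - (a⁻ + b⁻) := by
    rw [add_sub_add_comm, posPart_sub_negPart, posPart_sub_negPart]
  rw [hab, posPart_sub_of_inf_eq_zero h.add_posPart_inf_add_negPart]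

lemma RDisjoint.negPart_add (h : RDisjoint a b) : (a + b)⁻ = a⁻ + b⁻ := by
  rw [← posPart_neg, neg_add, h.neg.posPart_add, posPart_neg, posPart_neg]

lemma RDisjoint.abs_add (h : RDisjoint a b) : |a + b| = |a| + |b| := by
  rw [← posPart_add_negPart, h.posPart_add, h.negPart_add, ← posPart_add_negPart a,
    ← posPart_add_negPart b, add_add_add_comm]

lemma isOAO_posPart : IsOAO (fun a : α ↦ a⁺) :=
  fun _ _ h ↦ h.posPart_add

lemma isOAO_negPart : IsOAO (fun a : α ↦ a⁻) :=
  fun _ _ h ↦ h.negPart_add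

lemma isOAO_abs : IsOAO (fun a : α ↦ |a|) :=
  fun _ _ h ↦ h.abs_add

lemma IsFragment.map {T : α → α} (hT : IsOAO T) (hT_abs : ∀ a, |T a| ≤ |a|) {x y : α}
    (h : IsFragment x y) : IsFragment (T x) (T y) := by
  have hTy : T y - T x = T (y - x) := by
    rw [sub_eq_iff_eq_add', ← hT x (y - x) h, add_sub_cancel]
  rw [IsFragment, hTy]
  exact h.mono (hT_abs x) (hT_abs (y - x))

end Disjoint

/-- If `x ⊑ y` then `x⁺ ⊑ y⁺`, `x⁻ ⊑ y⁻` and `|x| ⊑ |y|`. -/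
theorem isFragment_posPart_negPart_abs (x y : E) (h : IsFragment x y) :
    IsFragment x⁺ y⁺ ∧ IsFragment x⁻ y⁻ ∧ IsFragment |x| |y| :=
  ⟨h.map isOAO_posPart abs_posPart_le_abs, h.map isOAO_negPart abs_negPart_le_abs,
    h.map isOAO_abs fun a ↦ (abs_abs a).le⟩
end

section
/- Let $E, F$ be Riesz spaces and $T : E \to F$ an orthogonally additive operator that preserves the lateral order (i.e., $x \sqsubseteq y$ implies $T(x) \sqsubseteq T(y)$). Then $T$ preserves disjointness. -/
theorem isFragment_add_right_iff {E : Type*} [Lattice E] [AddCommGroup E] {x y : E} :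
    IsFragment x (x + y) ↔ RDisjoint x y := by
  rw [IsFragment, add_sub_cancel_left]

variable {E F : Type*}
  [Lattice E] [AddCommGroup E] [CovariantClass E E (· + ·) (· ≤ ·)]
  [Lattice F] [AddCommGroup F] [CovariantClass F F (· + ·) (· ≤ ·)]

/-- A lateral order preserving OAO preserves disjointness. -/
theorem oao_lateral_order_preserving_preserves_disjointness (T : E → F)
    (hT : IsOAO T)
    (hlat : ∀ x y : E, IsFragment x y → IsFragment (T x) (T y)) :
    ∀ x y : E, RDisjoint x y → RDisjoint (T x) (T y) := by
  intro x y hxy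
  have hfrag : IsFragment (T x) (T (x + y)) := hlat x (x + y) (isFragment_add_right_iff.2 hxy)
  rwa [hT x y hxy, isFragment_add_right_iff] at hfrag
end

section
/- Let $E, F$ be Riesz spaces and $T : E \to F$ a disjointness preserving orthogonally additive operator. Then $T$ is laterally-to-order bounded: for every $e \in E$, the set $\{T(x) : x \sqsubseteq e\}$ is order bounded in $F$. -/
variable {E F : Type*}
  [Lattice E] [AddCommGroup E] [CovariantClass E E (· + ·) (· ≤ ·)]
  [Lattice F] [AddCommGroup F] [CovariantClass F F (· + ·) (· ≤ ·)]

lemma RDisjoint.abs_le_abs_add {G : Type*} [Lattice G] [AddCommGroup G] [AddLeftMono G]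
    {u v : G} (h : RDisjoint u v) : |u| ≤ |u + v| := by
  have h_le_v : |u| - |u + v| ≤ |v| := by
    simpa [sub_le_iff_le_add, add_comm] using abs_add_le (u + v) (-v)
  have h_le_u : |u| - |u + v| ≤ |u| := sub_le_self _ (abs_nonneg _)
  exact sub_nonpos.mp (h ▸ le_inf h_le_u h_le_v)

lemma IsFragment.abs_le {G : Type*} [Lattice G] [AddCommGroup G] [AddLeftMono G]
    {x e : G} (h : IsFragment x e) : |x| ≤ |e| := by
  simpa using RDisjoint.abs_le_abs_add h

lemma IsOAO.isFragment_apply {α β : Type*} [Lattice α] [AddCommGroup α] [Lattice β]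
    [AddCommGroup β] {T : α → β} (hT : IsOAO T)
    (hd : ∀ x y : α, RDisjoint x y → RDisjoint (T x) (T y)) {x e : α} (h : IsFragment x e) :
    IsFragment (T x) (T e) := by
  have h_split : T e = T x + T (e - x) := by simpa using hT x (e - x) h
  simpa [IsFragment, h_split] using hd x (e - x) h

/-- A disjointness preserving OAO is laterally-to-order bounded. -/
theorem disjointness_preserving_oao_laterally_to_order_bounded (T : E → F)
    (hT : IsOAO T)
    (hd : ∀ x y : E, RDisjoint x y → RDisjoint (T x) (T y)) :
    ∀ e : E, ∃ a b : F, ∀ x : E, IsFragment x e → a ≤ T x ∧ T x ≤ b := by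
  intro e
  refine ⟨-|T e|, |T e|, fun x hx => ?_⟩
  have h_abs : |T x| ≤ |T e| := (hT.isFragment_apply hd hx).abs_le
  exact ⟨neg_le.mpr ((neg_le_abs _).trans h_abs), (le_abs_self _).trans h_abs⟩
end

section
/- There exists a disjointness preserving orthogonally additive operator $T : C[0,1] \to C[0,1]$ and elements $x, y \in C[0,1]^+$ such that $(T(x))^+ \wedge (T(y))^- \ne 0$; namely, define $T(\mathbf{1}) = \mathbf{1}$, $T(2\cdot\mathbf{1}) = -\mathbf{1}$, and $T(z) = 0$ for all other $z$, where $\mathbf{1}$ is the constant-one function. Then $T$ is a disjointness preserving OAO and $(T(\mathbf{1}))^+ \wedge (T(2\cdot\mathbf{1}))^- = \mathbf{1} \ne 0$. -/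
/-!
Every continuous function `f` that vanishes nowhere on a connected space is a weak unit
(`x ⊥ f` forces `x = 0`) and admits no nontrivial disjoint decomposition `f = x + y`
(the sets `{x ≠ 0}` and `{y ≠ 0}` would split the space into two disjoint open pieces).
Hence any operator that vanishes off the nowhere-vanishing functions is orthogonally additive
and disjointness preserving, whatever its values on them: all disjoint pairs it sees are of the
form `(z, 0)`.
-/

section RDisjoint

variable {E : Type*} [Lattice E] [AddCommGroup E]

theorem RDisjoint.symm_s19 {x y : E} (h : RDisjoint x y) : RDisjoint y x := by
  rw [RDisjoint, inf_comm]
  exact h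

theorem RDisjoint.zero_right [IsOrderedAddMonoid E] (x : E) : RDisjoint x 0 := by
  rw [RDisjoint, abs_zero, inf_eq_right]
  exact abs_nonneg x

theorem RDisjoint.zero_left [IsOrderedAddMonoid E] (y : E) : RDisjoint 0 y :=
  (zero_right y).symm_s19

end RDisjoint

section SupportedOperator

variable {E F : Type*} [Lattice E] [AddCommGroup E] [Lattice F] [AddCommGroup F]
  {S : Set E} {T : E → F}

theorem isOAO_of_support_subset (hT : Function.support T ⊆ S) (h0 : (0 : E) ∉ S)
    (hunit : ∀ s ∈ S, ∀ x, RDisjoint x s → x = 0)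
    (hindec : ∀ x y, RDisjoint x y → x + y ∈ S → x = 0 ∨ y = 0) : IsOAO T := by
  rw [Function.support_subset_iff'] at hT
  intro x y hxy
  have hT0 : T 0 = 0 := hT 0 h0
  rcases eq_or_ne x 0 with rfl | hx
  · rw [hT0, zero_add, zero_add]
  rcases eq_or_ne y 0 with rfl | hy
  · rw [hT0, add_zero, add_zero]
  have hxS : x ∉ S := fun hxS => hy (hunit x hxS y hxy.symm_s19)
  have hyS : y ∉ S := fun hyS => hx (hunit y hyS x hxy)
  have hxyS : x + y ∉ S := fun hxyS => (hindec x y hxy hxyS).elim hx hy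
  rw [hT _ hxyS, hT _ hxS, hT _ hyS, add_zero]

theorem rdisjoint_map_of_support_subset [IsOrderedAddMonoid F] (hT : Function.support T ⊆ S)
    (h0 : (0 : E) ∉ S) (hunit : ∀ s ∈ S, ∀ x, RDisjoint x s → x = 0) {x y : E}
    (hxy : RDisjoint x y) : RDisjoint (T x) (T y) := by
  rw [Function.support_subset_iff'] at hT
  by_cases hxS : x ∈ S
  · rw [hunit x hxS y hxy.symm_s19, hT 0 h0]
    exact .zero_right _
  · rw [hT x hxS]
    exact .zero_left _

end SupportedOperator

theorem abs_inf_abs_eq_zero_iff {α : Type*} [AddCommGroup α] [LinearOrder α]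
    [IsOrderedAddMonoid α] {a b : α} : |a| ⊓ |b| = 0 ↔ a = 0 ∨ b = 0 := by
  grind [abs_nonneg, abs_eq_zero]

namespace ContinuousMap

variable {X F : Type*} [TopologicalSpace X]

theorem rdisjoint_iff {x y : C(X, ℝ)} : RDisjoint x y ↔ ∀ t, x t = 0 ∨ y t = 0 := by
  simp only [RDisjoint, ContinuousMap.ext_iff, inf_apply, abs_apply, zero_apply,
    abs_inf_abs_eq_zero_iff]

theorem eq_zero_of_rdisjoint_of_forall_ne_zero {f x : C(X, ℝ)} (hf : ∀ t, f t ≠ 0)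
    (h : RDisjoint x f) : x = 0 :=
  ext fun t => (rdisjoint_iff.mp h t).resolve_right (hf t)

theorem eq_zero_or_eq_zero_of_rdisjoint [PreconnectedSpace X] {x y : C(X, ℝ)}
    (h : RDisjoint x y) (hxy : ∀ t, x t + y t ≠ 0) : x = 0 ∨ y = 0 := by
  have hdisj : ∀ t, x t = 0 ∨ y t = 0 := rdisjoint_iff.mp h
  have hcover : Set.univ ⊆ {t | x t ≠ 0} ∪ {t | y t ≠ 0} := fun t _ => by
    by_cases hx : x t = 0
    · exact .inr fun hy => hxy t (by rw [hx, hy, add_zero])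
    · exact .inl hx
  rcases isPreconnected_univ.subset_or_subset (isOpen_ne_fun x.continuous continuous_const)
    (isOpen_ne_fun y.continuous continuous_const)
    (Set.disjoint_left.mpr fun t hx hy => (hdisj t).elim hx hy) hcover with hx | hy
  · exact .inr (ext fun t => (hdisj t).resolve_left (hx (Set.mem_univ t)))
  · exact .inl (ext fun t => (hdisj t).resolve_right (hy (Set.mem_univ t)))

variable [Lattice F] [AddCommGroup F] {T : C(X, ℝ) → F}

theorem zero_notMem_setOf_forall_ne_zero [Nonempty X] :
    (0 : C(X, ℝ)) ∉ {z : C(X, ℝ) | ∀ t, z t ≠ 0} :=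
  fun h => h (Classical.arbitrary X) rfl

theorem isOAO_of_support_subset_forall_ne_zero [PreconnectedSpace X] [Nonempty X]
    (hT : Function.support T ⊆ {z | ∀ t, z t ≠ 0}) : IsOAO T :=
  isOAO_of_support_subset hT zero_notMem_setOf_forall_ne_zero
    (fun _ hs _ hx => eq_zero_of_rdisjoint_of_forall_ne_zero hs hx)
    (fun _ _ hxy hs => eq_zero_or_eq_zero_of_rdisjoint hxy hs)

theorem rdisjoint_map_of_support_subset_forall_ne_zero [Nonempty X] [IsOrderedAddMonoid F]
    (hT : Function.support T ⊆ {z | ∀ t, z t ≠ 0}) {x y : C(X, ℝ)} (hxy : RDisjoint x y) :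
    RDisjoint (T x) (T y) :=
  rdisjoint_map_of_support_subset hT zero_notMem_setOf_forall_ne_zero
    (fun _ hs _ hx => eq_zero_of_rdisjoint_of_forall_ne_zero hs hx) hxy

theorem two_nsmul_one_apply (t : X) : (2 • 1 : C(X, ℝ)) t = 2 := by
  rw [nsmul_apply, one_apply, two_nsmul]
  norm_num

open Classical in
noncomputable def oneTwoOperator (X : Type*) [TopologicalSpace X] (z : C(X, ℝ)) : C(X, ℝ) :=
  if z = 1 then 1 else if z = 2 • 1 then -1 else 0

theorem support_oneTwoOperator_subset :
    Function.support (oneTwoOperator X) ⊆ {z | ∀ t, z t ≠ 0} := by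
  intro z hz t
  rw [Function.mem_support, oneTwoOperator] at hz
  split_ifs at hz with h1 h2
  · simp [h1]
  · rw [h2, two_nsmul_one_apply]
    exact two_ne_zero
  · exact absurd rfl hz

theorem oneTwoOperator_one : oneTwoOperator X 1 = 1 := if_pos rfl

theorem oneTwoOperator_two_smul_one [Nonempty X] : oneTwoOperator X (2 • 1) = -1 := by
  have h : (2 • 1 : C(X, ℝ)) ≠ 1 := fun h => by
    have := congr($h (Classical.arbitrary X))
    rw [two_nsmul_one_apply, one_apply] at this
    norm_num at this
  rw [oneTwoOperator, if_neg h, if_pos rfl]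

theorem oneTwoOperator_of_ne {z : C(X, ℝ)} (h1 : z ≠ 1) (h2 : z ≠ 2 • 1) :
    oneTwoOperator X z = 0 := by
  rw [oneTwoOperator, if_neg h1, if_neg h2]

end ContinuousMap

/-- Meyer's lemma fails for OAOs on positive (not laterally bounded) elements:
the OAO on `C[0,1]` sending `𝟏 ↦ 𝟏`, `2·𝟏 ↦ -𝟏` and everything else to `0` preserves
disjointness, yet `(T 𝟏)⁺ ⊓ (T (2·𝟏))⁻ = 𝟏 ≠ 0`. -/
theorem meyer_lemma_fails_for_oao :
    ∃ T : C(Set.Icc (0:ℝ) 1, ℝ) → C(Set.Icc (0:ℝ) 1, ℝ),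
      IsOAO T ∧
      (∀ x y, RDisjoint x y → RDisjoint (T x) (T y)) ∧
      T 1 = 1 ∧
      T (2 • (1 : C(Set.Icc (0:ℝ) 1, ℝ))) = -1 ∧
      (∀ z : C(Set.Icc (0:ℝ) 1, ℝ),
        z ≠ 1 → z ≠ 2 • (1 : C(Set.Icc (0:ℝ) 1, ℝ)) → T z = 0) ∧
      (0 : C(Set.Icc (0:ℝ) 1, ℝ)) ≤ 1 ∧
      (0 : C(Set.Icc (0:ℝ) 1, ℝ)) ≤ 2 • (1 : C(Set.Icc (0:ℝ) 1, ℝ)) ∧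
      (T 1)⁺ ⊓ (T (2 • (1 : C(Set.Icc (0:ℝ) 1, ℝ))))⁻ = 1 ∧
      (1 : C(Set.Icc (0:ℝ) 1, ℝ)) ≠ 0 := by
  have : Nonempty (Set.Icc (0:ℝ) 1) := ⟨⟨0, by norm_num⟩⟩
  have hpos : (1 : C(Set.Icc (0:ℝ) 1, ℝ))⁺ = 1 := posPart_eq_self.mpr zero_le_one
  have hsupp := ContinuousMap.support_oneTwoOperator_subset (X := Set.Icc (0:ℝ) 1)
  refine ⟨ContinuousMap.oneTwoOperator _,
    ContinuousMap.isOAO_of_support_subset_forall_ne_zero hsupp,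
    fun _ _ => ContinuousMap.rdisjoint_map_of_support_subset_forall_ne_zero hsupp,
    ContinuousMap.oneTwoOperator_one, ContinuousMap.oneTwoOperator_two_smul_one,
    fun _ => ContinuousMap.oneTwoOperator_of_ne, zero_le_one, by positivity, ?_, one_ne_zero⟩
  rw [ContinuousMap.oneTwoOperator_one, ContinuousMap.oneTwoOperator_two_smul_one, negPart_neg,
    hpos, inf_idem]
end
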